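/- arXiv:2510.20202 — 8 statements merged into one kernel-verified Lean document; each statement's English description precedes it below -/
import Mathlib

section
/- Let X : ℝⁿ → ℝⁿ be a locally Lipschitz vector field and g : ℝⁿ → ℝ a continuously differentiable function such that 0 is a regular value of g (i.e., for every x with g(x) = 0, the gradient ∇g(x) ≠ 0). Suppose that for every x with g(x) = 0 one has ⟨∇g(x), X(x)⟩ ≥ 0. Then the set C = {x ∈ ℝⁿ : g(x) ≥ 0} is forward invariant: for every T ∈ (0, ∞] and every curve x : [0, T) → ℝⁿ that is differentiable with x'(t) = X(x(t)) for all t ∈ [0, T) and satisfies g(x(0)) ≥ 0, one has g(x(t)) ≥ 0 for all t ∈ [0, T). -/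
open scoped RealInnerProductSpace ENNReal
open Metric Set Filter Topology Asymptotics

/-! Let `φ t` be the distance from `x t` to `C = {g ≥ 0}`. At every `p ∈ C` the field is
subtangent, `infDist (p + h • X p) C = o(h)` as `h → 0⁺`: trivially where `g p > 0`, and where
`g p = 0` because `p + h • (X p + ε • ∇g p)` lies in `C` for small `h > 0`. Comparing `x (t + h)`
with `p + h • X p` for a nearest point `p` of `C` gives the Dini estimate `D⁺φ ≤ K φ`, with `K` a
Lipschitz constant of `X` near the trajectory, and Grönwall's inequality with `φ 0 = 0` forces
`φ ≡ 0`. -/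

lemma frequently_slope_lt_of_eventually_le {f : ℝ → ℝ} {s f' r : ℝ}
    (hf : ∀ ε > 0, ∀ᶠ z in 𝓝[>] s, f z ≤ f s + (z - s) * (f' + ε)) (hr : f' < r) :
    ∃ᶠ z in 𝓝[>] s, (z - s)⁻¹ * (f z - f s) < r := by
  refine Eventually.frequently ?_
  filter_upwards [hf ((r - f') / 2) (by linarith), self_mem_nhdsWithin] with z hz hzs
  have hpos : 0 < z - s := sub_pos.2 hzs
  calc (z - s)⁻¹ * (f z - f s) ≤ f' + (r - f') / 2 := by
        rw [inv_mul_le_iff₀ hpos]; linarith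
    _ < r := by linarith

section Nagumo

variable {E : Type*} [NormedAddCommGroup E] [NormedSpace ℝ E]

lemma eventually_infDist_le_of_hasDerivAt {C : Set E} {x : ℝ → E} {v w p : E} {s : ℝ}
    (hx : HasDerivAt x v s) (hw : (fun h : ℝ => infDist (p + h • w) C) =o[𝓝[>] 0] fun h => h)
    {ε : ℝ} (hε : 0 < ε) :
    ∀ᶠ z in 𝓝[>] s, infDist (x z) C ≤ dist (x s) p + (z - s) * (dist v w + ε) := by
  have hshift : Tendsto (fun z : ℝ => z - s) (𝓝[>] s) (𝓝[>] 0) := by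
    refine tendsto_nhdsWithin_iff.2 ⟨?_, ?_⟩
    · exact ((continuous_sub_right s).tendsto' s 0 (sub_self s)).mono_left nhdsWithin_le_nhds
    · filter_upwards [self_mem_nhdsWithin] with z hz using sub_pos.2 (mem_Ioi.1 hz)
  filter_upwards [((hasDerivAt_iff_isLittleO.1 hx).def (half_pos hε)).filter_mono
      nhdsWithin_le_nhds, hshift.eventually (hw.def (half_pos hε)), self_mem_nhdsWithin]
    with z hxz hwz hzs
  have hpos : 0 < z - s := sub_pos.2 hzs
  rw [Real.norm_eq_abs, abs_of_pos hpos] at hxz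
  rw [Real.norm_eq_abs, Real.norm_eq_abs, abs_of_nonneg infDist_nonneg, abs_of_pos hpos] at hwz
  have hsplit : x z - (p + (z - s) • w) =
      (x z - x s - (z - s) • v) + (x s - p) + (z - s) • (v - w) := by
    rw [smul_sub]; abel
  have hdist : dist (x z) (p + (z - s) • w) ≤
      ε / 2 * (z - s) + dist (x s) p + (z - s) * dist v w := by
    rw [dist_eq_norm, hsplit, dist_eq_norm, dist_eq_norm]
    refine norm_add₃_le.trans ?_
    rw [norm_smul, Real.norm_eq_abs, abs_of_pos hpos]
    gcongr
  calc infDist (x z) C ≤ infDist (p + (z - s) • w) C + dist (x z) (p + (z - s) • w) :=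
        infDist_le_infDist_add_dist
    _ ≤ dist (x s) p + (z - s) * (dist v w + ε) := by linarith

lemma isLittleO_infDist_superlevel_of_pos {g : E → ℝ} {p : E} (hg : ContinuousAt g p)
    (hgp : 0 < g p) (v : E) :
    (fun h : ℝ => infDist (p + h • v) {y | 0 ≤ g y}) =o[𝓝[>] 0] fun h => h := by
  refine IsLittleO.of_bound fun c hc => ?_
  have hline : Tendsto (fun h : ℝ => p + h • v) (𝓝 0) (𝓝 p) :=
    Continuous.tendsto' (by fun_prop) 0 p (by simp)
  filter_upwards [(hline.eventually (hg.eventually (lt_mem_nhds hgp))).filter_mono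
    nhdsWithin_le_nhds] with h hh
  rw [infDist_zero_of_mem (show p + h • v ∈ {y | 0 ≤ g y} from hh.le), norm_zero]
  positivity

variable [ProperSpace E]

theorem mem_of_hasDerivAt_of_isLittleO_infDist {C : Set E} (hC : IsClosed C) {X : E → E}
    (hX : LocallyLipschitz X)
    (htan : ∀ p ∈ C, (fun h : ℝ => infDist (p + h • X p) C) =o[𝓝[>] 0] fun h => h)
    {x : ℝ → E} {a b : ℝ} (hx : ∀ t ∈ Icc a b, HasDerivAt x (X (x t)) t) (ha : x a ∈ C) :
    ∀ t ∈ Icc a b, x t ∈ C := by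
  have hxc : ContinuousOn x (Icc a b) := fun t ht => (hx t ht).continuousAt.continuousWithinAt
  obtain ⟨R, hR⟩ := ((isCompact_Icc.image_of_continuousOn hxc).isBounded).subset_closedBall (x a)
  obtain ⟨K, hK⟩ := (hX.locallyLipschitzOn (s := closedBall (x a) (2 * R))
    ).exists_lipschitzOnWith_of_compact (isCompact_closedBall _ _)
  set φ : ℝ → ℝ := fun t => infDist (x t) C
  have hdini : ∀ t ∈ Ico a b, ∀ ε > 0,
      ∀ᶠ z in 𝓝[>] t, φ z ≤ φ t + (z - t) * (K * φ t + ε) := by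
    intro t ht ε hε
    have hxt : dist (x t) (x a) ≤ R := hR (mem_image_of_mem x (Ico_subset_Icc_self ht))
    -- a nearest point `p` of `C` to `x t` stays within `2 * R` of `x a`, where `X` is `K`-Lipschitz
    obtain ⟨p, hpC, hp⟩ := hC.exists_infDist_eq_dist ⟨x a, ha⟩ (x t)
    have hφt : φ t ≤ R := (infDist_le_dist_of_mem ha).trans hxt
    have hLip : dist (X (x t)) (X p) ≤ K * φ t := by
      rw [show φ t = dist (x t) p from hp]
      refine hK.dist_le_mul _ (mem_closedBall.2 (by linarith [dist_nonneg (x := x t) (y := x a)]))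
        _ (mem_closedBall.2 ?_)
      calc dist p (x a) ≤ dist (x t) p + dist (x t) (x a) := dist_triangle_left _ _ _
        _ ≤ 2 * R := by rw [← hp]; linarith
    filter_upwards [eventually_infDist_le_of_hasDerivAt (hx t (Ico_subset_Icc_self ht))
      (htan p hpC) hε, self_mem_nhdsWithin] with z hz hzt
    rw [← hp] at hz
    calc φ z ≤ _ := hz
      _ ≤ φ t + (z - t) * (K * φ t + ε) := by
        gcongr
        exact (sub_pos.2 hzt).le
  have hφ := le_gronwallBound_of_liminf_deriv_right_le (f := φ)
    (f' := fun t => K * φ t) (δ := 0) (K := K) (ε := 0)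
    (fun t ht => (continuous_infDist_pt C).continuousAt.comp_continuousWithinAt (hxc t ht))
    (fun t ht _ hr => frequently_slope_lt_of_eventually_le (hdini t ht) hr)
    (infDist_zero_of_mem ha).le (fun t _ => by rw [add_zero])
  intro t ht
  rw [hC.mem_iff_infDist_zero ⟨x a, ha⟩]
  refine le_antisymm ?_ infDist_nonneg
  simpa only [gronwallBound_ε0_δ0] using hφ t ht

end Nagumo

section Superlevel

variable {F : Type*} [NormedAddCommGroup F] [InnerProductSpace ℝ F] [CompleteSpace F]
  {g : F → ℝ} {g' p v : F}

lemma eventually_pos_add_smul_of_hasGradientAt (hg : HasGradientAt g g' p) (hgp : g p = 0)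
    (hv : 0 < ⟪g', v⟫) : ∀ᶠ h in 𝓝[>] (0 : ℝ), 0 < g (p + h • v) := by
  have hline : HasDerivAt (fun h : ℝ => g (p + h • v)) ⟪g', v⟫ 0 := by
    have hl : HasDerivAt (fun h : ℝ => p + h • v) v 0 := by
      simpa using ((hasDerivAt_id (0 : ℝ)).smul_const v).const_add p
    exact hg.hasFDerivAt.comp_hasDerivAt_of_eq (0 : ℝ) hl (by simp)
  filter_upwards [hline.tendsto_slope_zero_right.eventually (eventually_gt_nhds hv),
    self_mem_nhdsWithin] with h hslope hh
  simp only [zero_add, zero_smul, add_zero, hgp, sub_zero, smul_eq_mul] at hslope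
  exact pos_of_mul_pos_right hslope (inv_pos.2 hh).le

lemma isLittleO_infDist_superlevel_of_hasGradientAt (hg : HasGradientAt g g' p) (hgp : g p = 0)
    (hg' : g' ≠ 0) (hv : 0 ≤ ⟪g', v⟫) :
    (fun h : ℝ => infDist (p + h • v) {y | 0 ≤ g y}) =o[𝓝[>] 0] fun h => h := by
  refine IsLittleO.of_bound fun c hc => ?_
  have hnorm : 0 < ‖g'‖ := norm_pos_iff.2 hg'
  set w : F := (c / ‖g'‖) • g'
  have hw : ‖w‖ = c := by
    rw [norm_smul, Real.norm_eq_abs, abs_of_pos (div_pos hc hnorm), div_mul_cancel₀ _ hnorm.ne']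
  have hvw : 0 < ⟪g', v + w⟫ := by
    rw [inner_add_right, real_inner_smul_right, real_inner_self_eq_norm_sq]
    have : 0 < c / ‖g'‖ * ‖g'‖ ^ 2 := by positivity
    linarith
  filter_upwards [eventually_pos_add_smul_of_hasGradientAt hg hgp hvw, self_mem_nhdsWithin]
    with h hpos hh
  rw [Real.norm_eq_abs, Real.norm_eq_abs, abs_of_nonneg infDist_nonneg, abs_of_pos hh]
  calc infDist (p + h • v) {y | 0 ≤ g y} ≤ dist (p + h • v) (p + h • (v + w)) :=
        infDist_le_dist_of_mem hpos.le
    _ = c * h := by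
        rw [dist_eq_norm, smul_add, ← add_assoc, sub_add_cancel_left, norm_neg, norm_smul,
          Real.norm_eq_abs, abs_of_pos hh, hw, mul_comm]

end Superlevel

theorem stmt_0_general (n : ℕ)
    (X : EuclideanSpace ℝ (Fin n) → EuclideanSpace ℝ (Fin n))
    (g : EuclideanSpace ℝ (Fin n) → ℝ)
    (hX : LocallyLipschitz X)
    (hg : ContDiff ℝ 1 g)
    (hreg : ∀ x, g x = 0 → gradient g x ≠ 0)
    (hbar : ∀ x, g x = 0 → 0 ≤ ⟪gradient g x, X x⟫)
    (T : ℝ≥0∞)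
    (x : ℝ → EuclideanSpace ℝ (Fin n))
    (hx : ∀ t : ℝ, 0 ≤ t → ENNReal.ofReal t < T → HasDerivAt x (X (x t)) t)
    (hx0 : 0 ≤ g (x 0)) :
    ∀ t : ℝ, 0 ≤ t → ENNReal.ofReal t < T → 0 ≤ g (x t) := by
  intro t ht htT
  have htan : ∀ p ∈ {y | 0 ≤ g y}, (fun h : ℝ => infDist (p + h • X p) {y | 0 ≤ g y})
      =o[𝓝[>] 0] fun h => h := by
    intro p hp
    rcases (show 0 ≤ g p from hp).lt_or_eq with hpos | hzero
    · exact isLittleO_infDist_superlevel_of_pos hg.continuous.continuousAt hpos _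
    · exact isLittleO_infDist_superlevel_of_hasGradientAt
        ((hg.differentiable one_ne_zero) p).hasGradientAt hzero.symm (hreg p hzero.symm)
        (hbar p hzero.symm)
  refine mem_of_hasDerivAt_of_isLittleO_infDist (isClosed_le continuous_const hg.continuous) hX
    htan (fun s hs => hx s hs.1 ((ENNReal.ofReal_le_ofReal hs.2).trans_lt htT)) hx0 t ⟨ht, le_rfl⟩

/-- Euclidean Nagumo-type forward invariance (condition (i) of the paper's Theorem 1):
if `0` is a regular value of `g` and `⟨∇g(x), X(x)⟩ ≥ 0` whenever `g(x) = 0`, then the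
zero-superlevel set `{x | g x ≥ 0}` is forward invariant for the locally Lipschitz
vector field `X`. -/
theorem stmt_0 (n : ℕ)
    (X : EuclideanSpace ℝ (Fin n) → EuclideanSpace ℝ (Fin n))
    (g : EuclideanSpace ℝ (Fin n) → ℝ)
    (hX : LocallyLipschitz X)
    (hg : ContDiff ℝ 1 g)
    (hreg : ∀ x, g x = 0 → gradient g x ≠ 0)
    (hbar : ∀ x, g x = 0 → 0 ≤ ⟪gradient g x, X x⟫)
    (T : ℝ≥0∞) (hT : 0 < T)
    (x : ℝ → EuclideanSpace ℝ (Fin n))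
    (hx : ∀ t : ℝ, 0 ≤ t → ENNReal.ofReal t < T → HasDerivAt x (X (x t)) t)
    (hx0 : 0 ≤ g (x 0)) :
    ∀ t : ℝ, 0 ≤ t → ENNReal.ofReal t < T → 0 ≤ g (x t) :=
  stmt_0_general n X g hX hg hreg hbar T x hx hx0
end

section
/- Let X : ℝⁿ → ℝⁿ be a locally Lipschitz vector field, h : ℝⁿ → ℝ continuously differentiable, and let C = {x ∈ ℝⁿ : h(x) ≥ 0}. Let α : ℝ → ℝ be locally Lipschitz, strictly increasing, with α(0) = 0, and let D ⊆ ℝⁿ be an open set containing C such that ⟨∇h(x), X(x)⟩ ≥ -α(h(x)) for all x ∈ D. Then for every T ∈ (0, ∞] and every differentiable curve x : [0, T) → D with x'(t) = X(x(t)) for all t ∈ [0, T) and h(x(0)) ≥ 0, one has h(x(t)) ≥ 0 (equivalently x(t) ∈ C) for all t ∈ [0, T). -/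
open scoped RealInnerProductSpace ENNReal

open Set

/-- Past the last time `s` with `0 ≤ f s`, `f` would be negative, hence strictly increasing on
`[s, b]`, so `f b > f s ≥ 0`. -/
theorem nonneg_of_deriv_pos_of_neg {f : ℝ → ℝ} {a b : ℝ} (hab : a ≤ b)
    (hf : ContinuousOn f (Icc a b)) (hderiv : ∀ t ∈ Ioo a b, f t < 0 → 0 < deriv f t)
    (ha : 0 ≤ f a) : 0 ≤ f b := by
  by_contra! hb
  set A := Icc a b ∩ f ⁻¹' Ici 0
  have hA_closed : IsClosed A := hf.preimage_isClosed_of_isClosed isClosed_Icc isClosed_Ici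
  have hA_bdd : BddAbove A := ⟨b, fun t ht => ht.1.2⟩
  obtain ⟨⟨has, hsb⟩, hfs⟩ : sSup A ∈ A := hA_closed.csSup_mem ⟨a, ⟨le_rfl, hab⟩, ha⟩ hA_bdd
  set s := sSup A
  have hneg : ∀ t ∈ Ioc s b, f t < 0 := fun t ⟨hst, htb⟩ => by
    by_contra! hft
    exact (le_csSup hA_bdd ⟨⟨has.trans hst.le, htb⟩, hft⟩).not_gt hst
  have hsb' : s < b := hsb.lt_of_ne fun hs => hb.not_ge (hs ▸ hfs)
  have hmono : StrictMonoOn f (Icc s b) := by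
    refine strictMonoOn_of_deriv_pos (convex_Icc s b) (hf.mono (Icc_subset_Icc_left has)) ?_
    rw [interior_Icc]
    exact fun t ht => hderiv t ⟨has.trans_lt ht.1, ht.2⟩ (hneg t (Ioo_subset_Ioc_self ht))
  exact hb.not_ge (hfs.trans (hmono (left_mem_Icc.mpr hsb) (right_mem_Icc.mpr hsb) hsb').le)

theorem stmt_2_general (n : ℕ)
    (X : EuclideanSpace ℝ (Fin n) → EuclideanSpace ℝ (Fin n))
    (h : EuclideanSpace ℝ (Fin n) → ℝ)
    (hh : ContDiff ℝ 1 h)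
    (C D : Set (EuclideanSpace ℝ (Fin n)))
    (hC : C = {x | 0 ≤ h x})
    (α : ℝ → ℝ)
    (hmono : StrictMono α) (hα0 : α 0 = 0)
    (hbar : ∀ x ∈ D, ⟪gradient h x, X x⟫ ≥ -α (h x))
    (T : ℝ≥0∞)
    (x : ℝ → EuclideanSpace ℝ (Fin n))
    (hxD : ∀ t : ℝ, 0 ≤ t → ENNReal.ofReal t < T → x t ∈ D)
    (hx : ∀ t : ℝ, 0 ≤ t → ENNReal.ofReal t < T → HasDerivAt x (X (x t)) t)
    (hx0 : 0 ≤ h (x 0)) :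
    ∀ t : ℝ, 0 ≤ t → ENNReal.ofReal t < T → x t ∈ C := by
  intro t₁ ht₁ ht₁T
  subst hC
  have hT : ∀ t ∈ Icc 0 t₁, ENNReal.ofReal t < T := fun t ht =>
    (ENNReal.ofReal_le_ofReal ht.2).trans_lt ht₁T
  have hderiv : ∀ t ∈ Icc 0 t₁, HasDerivAt (h ∘ x) ⟪gradient h (x t), X (x t)⟫ t := by
    intro t ht
    rw [inner_gradient_left]
    exact ((hh.differentiable one_ne_zero).differentiableAt.hasFDerivAt).comp_hasDerivAt t
      (hx t ht.1 (hT t ht))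
  refine nonneg_of_deriv_pos_of_neg ht₁
    (fun t ht => (hderiv t ht).continuousAt.continuousWithinAt) (fun t ht hneg => ?_) hx0
  have hα_neg : α (h (x t)) < 0 := hα0 ▸ hmono hneg
  rw [(hderiv t (Ioo_subset_Icc_self ht)).deriv]
  linarith [hbar (x t) (hxD t ht.1.le (hT t (Ioo_subset_Icc_self ht)))]

/-- Euclidean form of condition (ii) of the paper's Theorem 1: a barrier inequality
`⟨∇h, X⟩ ≥ -α(h)` on an open set `D ⊇ C = {h ≥ 0}` renders `C` forward invariant
for the locally Lipschitz vector field `X`, along solutions remaining in `D`. -/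
theorem stmt_2 (n : ℕ)
    (X : EuclideanSpace ℝ (Fin n) → EuclideanSpace ℝ (Fin n))
    (h : EuclideanSpace ℝ (Fin n) → ℝ)
    (hX : LocallyLipschitz X)
    (hh : ContDiff ℝ 1 h)
    (C D : Set (EuclideanSpace ℝ (Fin n)))
    (hC : C = {x | 0 ≤ h x})
    (α : ℝ → ℝ)
    (hα : LocallyLipschitz α) (hmono : StrictMono α) (hα0 : α 0 = 0)
    (hD : IsOpen D) (hCD : C ⊆ D)
    (hbar : ∀ x ∈ D, ⟪gradient h x, X x⟫ ≥ -α (h x))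
    (T : ℝ≥0∞) (hT : 0 < T)
    (x : ℝ → EuclideanSpace ℝ (Fin n))
    (hxD : ∀ t : ℝ, 0 ≤ t → ENNReal.ofReal t < T → x t ∈ D)
    (hx : ∀ t : ℝ, 0 ≤ t → ENNReal.ofReal t < T → HasDerivAt x (X (x t)) t)
    (hx0 : 0 ≤ h (x 0)) :
    ∀ t : ℝ, 0 ≤ t → ENNReal.ofReal t < T → x t ∈ C :=
  stmt_2_general n X h hh C D hC α hmono hα0 hbar T x hxD hx hx0
end

section
/- Let h : ℝⁿ → ℝ be twice continuously differentiable, f : ℝⁿ → ℝⁿ, G : ℝⁿ → ℝ^{n×m}, and k_d : ℝⁿ → ℝᵐ locally Lipschitz, and α : ℝ → ℝ locally Lipschitz, strictly increasing with α(0) = 0. Let D ⊆ ℝⁿ be open and suppose the CBF condition holds on D: for every x ∈ D, either G(x)ᵀ∇h(x) ≠ 0 or ∇h(x)·f(x) > -α(h(x)). Define a(x) = α(h(x)) + ∇h(x)·f(x) + ∇h(x)·G(x)k_d(x), b(x) = ‖G(x)ᵀ∇h(x)‖², λ_QP(a, b) = 0 if b = 0 and max{0, -a/b} if b ≠ 0,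 and k_QP(x) = k_d(x) + λ_QP(a(x), b(x))·G(x)ᵀ∇h(x). Then (a(x), b(x)) ∈ P = {(a,b) : a > 0 or b > 0} for every x ∈ D, and k_QP is locally Lipschitz on D. -/
open scoped RealInnerProductSpace

/-- The piecewise gain of the closed-form CBF-QP controller. -/
noncomputable def lamQP (a b : ℝ) : ℝ := if b = 0 then 0 else max 0 (-a / b)

/-!
Where `b = ‖G(x)ᵀ∇h(x)‖²` is positive, `λ_QP(a, b) = max 0 (-a / b)` is a locally Lipschitz
function of `(a, b)`. Where `b` vanishes, the CBF condition forces `a > 0`, and since `b ≥ 0`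
everywhere, `λ_QP` vanishes identically near such a point. So `λ_QP` is locally Lipschitz on
`P ∩ {b ≥ 0}`, which contains `(a(x), b(x))` for `x ∈ D`, and `k_QP` is obtained from it and from
the locally Lipschitz data by composition with smooth maps.
-/

open Set Filter Topology

section LocallyLipschitzOn

variable {X Y Z : Type*} [PseudoEMetricSpace X] [PseudoEMetricSpace Y] [PseudoEMetricSpace Z]
  {s : Set X} {x : X}

theorem LipschitzOnWith.congr {K : NNReal} {f g : X → Y} (hf : LipschitzOnWith K f s)
    (hfg : EqOn f g s) : LipschitzOnWith K g s := fun x hx y hy => by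
  rw [← hfg hx, ← hfg hy]
  exact hf hx hy

theorem LocallyLipschitzOn.prodMk {f : X → Y} {g : X → Z} (hf : LocallyLipschitzOn s f)
    (hg : LocallyLipschitzOn s g) : LocallyLipschitzOn s fun x => (f x, g x) := fun x hx => by
  obtain ⟨Kf, t, ht, hft⟩ := hf hx
  obtain ⟨Kg, u, hu, hgu⟩ := hg hx
  exact ⟨max Kf Kg, t ∩ u, inter_mem ht hu,
    (hft.mono inter_subset_left).prodMk (hgu.mono inter_subset_right)⟩

theorem LocallyLipschitzOn.comp {g : Y → Z} {f : X → Y} {t : Set Y}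
    (hg : LocallyLipschitzOn t g) (hf : LocallyLipschitzOn s f) (hst : MapsTo f s t) :
    LocallyLipschitzOn s (g ∘ f) := fun x hx => by
  obtain ⟨Kf, u, hu, hfu⟩ := hf hx
  obtain ⟨Kg, v, hv, hgv⟩ := hg (hst hx)
  have hv' : f ⁻¹' v ∈ 𝓝[s] x := (hf.continuousOn x hx).tendsto_nhdsWithin hst hv
  exact ⟨Kg * Kf, u ∩ f ⁻¹' v, inter_mem hu hv',
    hgv.comp (hfu.mono inter_subset_left) fun _ hy => hy.2⟩

theorem LocallyLipschitzOn.exists_mem_nhds_lipschitzOnWith_inter {f : X → Y}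
    (hf : LocallyLipschitzOn s f) (hx : x ∈ s) :
    ∃ K : NNReal, ∃ t ∈ 𝓝 x, LipschitzOnWith K f (t ∩ s) := by
  obtain ⟨K, t, ht, hft⟩ := hf hx
  obtain ⟨u, hu, hut⟩ := mem_nhdsWithin_iff_exists_mem_nhds_inter.mp ht
  exact ⟨K, u, hu, hft.mono hut⟩

end LocallyLipschitzOn

section ContDiff

variable {𝕜 X E F G : Type*} [RCLike 𝕜] [PseudoEMetricSpace X]
  [NormedAddCommGroup E] [NormedSpace 𝕜 E] [NormedAddCommGroup F] [NormedSpace 𝕜 F]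
  [NormedAddCommGroup G] [NormedSpace 𝕜 G] {s : Set X}

theorem ContDiff.comp_locallyLipschitzOn₂ {g : E × F → G} (hg : ContDiff 𝕜 1 g) {u : X → E}
    {v : X → F} (hu : LocallyLipschitzOn s u) (hv : LocallyLipschitzOn s v) :
    LocallyLipschitzOn s fun x => g (u x, v x) :=
  hg.locallyLipschitz.locallyLipschitzOn.comp (hu.prodMk hv) (mapsTo_univ _ _)

theorem LocallyLipschitzOn.clm_apply {T : X → E →L[𝕜] F} {u : X → E}
    (hT : LocallyLipschitzOn s T) (hu : LocallyLipschitzOn s u) :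
    LocallyLipschitzOn s fun x => T x (u x) :=
  isBoundedBilinearMap_apply.contDiff.comp_locallyLipschitzOn₂ hT hu

end ContDiff

section InnerProductSpace

variable {E F : Type*} [NormedAddCommGroup E] [InnerProductSpace ℝ E] [CompleteSpace E]
  [NormedAddCommGroup F] [InnerProductSpace ℝ F] [CompleteSpace F]

theorem ContDiff.locallyLipschitz_gradient {h : E → ℝ} (hh : ContDiff ℝ 2 h) :
    LocallyLipschitz (gradient h) := by
  have hdual : gradient h = (InnerProductSpace.toDual ℝ E).symm ∘ fderiv ℝ h := by
    rw [← toDual_comp_gradient, ← Function.comp_assoc, LinearIsometryEquiv.symm_comp_self,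
      Function.id_comp]
  rw [hdual]
  exact (InnerProductSpace.toDual ℝ E).symm.lipschitz.locallyLipschitz.comp
    (hh.fderiv_right (m := 1) le_rfl).locallyLipschitz

theorem LocallyLipschitz.adjoint {X : Type*} [PseudoEMetricSpace X] {T : X → F →L[ℝ] E}
    (hT : LocallyLipschitz T) : LocallyLipschitz fun x => ContinuousLinearMap.adjoint (T x) :=
  (ContinuousLinearMap.adjoint (𝕜 := ℝ) (E := F) (F := E)).lipschitz.locallyLipschitz.comp hT

theorem add_inner_pos_or_sq_norm_adjoint_pos {T : F →L[ℝ] E} {w d : E} {c : ℝ} (u : F)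
    (hcbf : ContinuousLinearMap.adjoint T w ≠ 0 ∨ ⟪w, d⟫ > -c) :
    0 < c + ⟪w, d⟫ + ⟪w, T u⟫ ∨ 0 < ‖ContinuousLinearMap.adjoint T w‖ ^ 2 := by
  by_cases hz : ContinuousLinearMap.adjoint T w = 0
  · have hTu : ⟪w, T u⟫ = 0 := by
      rw [← ContinuousLinearMap.adjoint_inner_left, hz, inner_zero_left]
    left
    linarith [hcbf.resolve_left (not_not.mpr hz)]
  · exact Or.inr (pow_pos (norm_pos_iff.mpr hz) 2)

end InnerProductSpace

theorem lamQP_of_pos {a b : ℝ} (hb : 0 < b) : lamQP a b = max 0 (-a / b) :=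
  if_neg hb.ne'

theorem lamQP_eq_zero {a b : ℝ} (ha : 0 < a) (hb : 0 ≤ b) : lamQP a b = 0 := by
  rcases hb.eq_or_lt with rfl | hb
  · exact if_pos rfl
  · rw [lamQP_of_pos hb]
    exact max_eq_left (div_neg_of_neg_of_pos (neg_lt_zero.mpr ha) hb).le

theorem locallyLipschitzOn_lamQP :
    LocallyLipschitzOn {p : ℝ × ℝ | (0 < p.1 ∨ 0 < p.2) ∧ 0 ≤ p.2} fun p => lamQP p.1 p.2 := by
  rintro p ⟨hp | hp, -⟩
  · refine ⟨0, _, inter_mem_nhdsWithin _ ((isOpen_lt continuous_const continuous_fst).mem_nhds hp),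
      (LipschitzWith.const 0).lipschitzOnWith.congr fun q hq => (lamQP_eq_zero hq.2 hq.1.2).symm⟩
  · have hquot : ContDiffAt ℝ 1 (fun q : ℝ × ℝ => -q.1 / q.2) p :=
      contDiffAt_fst.neg.div contDiffAt_snd hp.ne'
    obtain ⟨K, t, ht, hKt⟩ := hquot.exists_lipschitzOnWith
    refine ⟨1 * K, t ∩ {q | 0 < q.2}, mem_nhdsWithin_of_mem_nhds
      (inter_mem ht ((isOpen_lt continuous_const continuous_snd).mem_nhds hp)), ?_⟩
    exact ((LipschitzWith.id.const_max 0).comp_lipschitzOnWith (hKt.mono inter_subset_left)).congr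
      fun q hq => (lamQP_of_pos hq.2).symm

theorem stmt_6_general (n m : ℕ)
    (h : EuclideanSpace ℝ (Fin n) → ℝ)
    (f : EuclideanSpace ℝ (Fin n) → EuclideanSpace ℝ (Fin n))
    (G : EuclideanSpace ℝ (Fin n) →
      (EuclideanSpace ℝ (Fin m) →L[ℝ] EuclideanSpace ℝ (Fin n)))
    (kd : EuclideanSpace ℝ (Fin n) → EuclideanSpace ℝ (Fin m))
    (α : ℝ → ℝ)
    (hh : ContDiff ℝ 2 h) (hf : LocallyLipschitz f) (hG : LocallyLipschitz G)
    (hkd : LocallyLipschitz kd)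
    (hα : LocallyLipschitz α)
    (D : Set (EuclideanSpace ℝ (Fin n)))
    (hcbf : ∀ x ∈ D, ContinuousLinearMap.adjoint (G x) (gradient h x) ≠ 0 ∨
      ⟪gradient h x, f x⟫ > -α (h x))
    (a b : EuclideanSpace ℝ (Fin n) → ℝ)
    (ha : ∀ x, a x = α (h x) + ⟪gradient h x, f x⟫ + ⟪gradient h x, G x (kd x)⟫)
    (hb : ∀ x, b x = ‖ContinuousLinearMap.adjoint (G x) (gradient h x)‖ ^ 2)
    (kQP : EuclideanSpace ℝ (Fin n) → EuclideanSpace ℝ (Fin m))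
    (hkQP : ∀ x, kQP x =
      kd x + lamQP (a x) (b x) • ContinuousLinearMap.adjoint (G x) (gradient h x)) :
    (∀ x ∈ D, 0 < a x ∨ 0 < b x) ∧
    (∀ x ∈ D, ∃ K : NNReal, ∃ t ∈ nhds x, LipschitzOnWith K kQP (t ∩ D)) := by
  have hP : ∀ x ∈ D, 0 < a x ∨ 0 < b x := fun x hx => by
    rw [ha, hb]
    exact add_inner_pos_or_sq_norm_adjoint_pos (kd x) (hcbf x hx)
  have hw := hh.locallyLipschitz_gradient.locallyLipschitzOn (s := D)
  have hv : LocallyLipschitzOn D fun x => ContinuousLinearMap.adjoint (G x) (gradient h x) :=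
    hG.adjoint.locallyLipschitzOn.clm_apply hw
  have haL : LocallyLipschitzOn D a := by
    rw [funext ha]
    exact ((hα.comp (hh.of_le one_le_two).locallyLipschitz).locallyLipschitzOn.add
      (contDiff_inner.comp_locallyLipschitzOn₂ hw hf.locallyLipschitzOn)).add
      (contDiff_inner.comp_locallyLipschitzOn₂ hw
        (hG.locallyLipschitzOn.clm_apply hkd.locallyLipschitzOn))
  have hbL : LocallyLipschitzOn D b := by
    rw [funext hb]
    exact (contDiff_norm_sq ℝ).locallyLipschitz.locallyLipschitzOn.comp hv (mapsTo_univ _ _)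
  have hlam : LocallyLipschitzOn D fun x => lamQP (a x) (b x) :=
    locallyLipschitzOn_lamQP.comp (haL.prodMk hbL) fun x hx => ⟨hP x hx, show 0 ≤ b x by rw [hb]; positivity⟩
  have hk : LocallyLipschitzOn D kQP := by
    rw [funext hkQP]
    exact hkd.locallyLipschitzOn.add ((contDiff_smul (𝕜 := ℝ)).comp_locallyLipschitzOn₂ hlam hv)
  exact ⟨hP, fun x hx => hk.exists_mem_nhds_lipschitzOnWith_inter hx⟩

/-- Euclidean form of the paper's Corollary 1 (regularity part): under the CBF
condition on the open set `D`, the pair `(a(x), b(x))` lies in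
`P = {(a,b) | a > 0 ∨ b > 0}` for every `x ∈ D`, and the closed-form CBF-QP
controller `k_QP` is locally Lipschitz on `D`. -/
theorem stmt_6 (n m : ℕ)
    (h : EuclideanSpace ℝ (Fin n) → ℝ)
    (f : EuclideanSpace ℝ (Fin n) → EuclideanSpace ℝ (Fin n))
    (G : EuclideanSpace ℝ (Fin n) →
      (EuclideanSpace ℝ (Fin m) →L[ℝ] EuclideanSpace ℝ (Fin n)))
    (kd : EuclideanSpace ℝ (Fin n) → EuclideanSpace ℝ (Fin m))
    (α : ℝ → ℝ)
    (hh : ContDiff ℝ 2 h) (hf : LocallyLipschitz f) (hG : LocallyLipschitz G)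
    (hkd : LocallyLipschitz kd)
    (hα : LocallyLipschitz α) (hmono : StrictMono α) (hα0 : α 0 = 0)
    (D : Set (EuclideanSpace ℝ (Fin n))) (hD : IsOpen D)
    (hcbf : ∀ x ∈ D, ContinuousLinearMap.adjoint (G x) (gradient h x) ≠ 0 ∨
      ⟪gradient h x, f x⟫ > -α (h x))
    (a b : EuclideanSpace ℝ (Fin n) → ℝ)
    (ha : ∀ x, a x = α (h x) + ⟪gradient h x, f x⟫ + ⟪gradient h x, G x (kd x)⟫)
    (hb : ∀ x, b x = ‖ContinuousLinearMap.adjoint (G x) (gradient h x)‖ ^ 2)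
    (kQP : EuclideanSpace ℝ (Fin n) → EuclideanSpace ℝ (Fin m))
    (hkQP : ∀ x, kQP x =
      kd x + lamQP (a x) (b x) • ContinuousLinearMap.adjoint (G x) (gradient h x)) :
    (∀ x ∈ D, 0 < a x ∨ 0 < b x) ∧
    (∀ x ∈ D, ∃ K : NNReal, ∃ t ∈ nhds x, LipschitzOnWith K kQP (t ∩ D)) :=
  stmt_6_general n m h f G kd α hh hf hG hkd hα D hcbf a b ha hb kQP hkQP
end

section
/- Under the assumptions and definitions of the Euclidean CBF-QP controller (h : ℝⁿ → ℝ twice continuously differentiable; f, G, k_d locally Lipschitz; α locally Lipschitz, strictly increasing, α(0) = 0; D open; CBF condition: for every x ∈ D, either G(x)ᵀ∇h(x) ≠ 0 or ∇h(x)·f(x) > -α(h(x)); a(x) = α(h(x)) + ∇h(x)·f(x) + ∇h(x)·G(x)k_d(x); b(x) = ‖G(x)ᵀ∇h(x)‖²; k_QP(x) = k_d(x) + λ_QP(a(x), b(x))·G(x)ᵀ∇h(x) with λ_QP(a,b) = 0 if b = 0 and max{0,-a/b} otherwise), the controller satisfies the barrier constraint on D: for every x ∈ D, ∇h(x)·f(x)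 + ∇h(x)·G(x)·k_QP(x) ≥ -α(h(x)). -/
open scoped RealInnerProductSpace

/-- Feasibility part of the paper's Proposition 1 / Corollary 1 in Euclidean form:
the closed-form CBF-QP controller `k_QP` satisfies the barrier constraint
`⟨∇h, f⟩ + ⟨∇h, G k_QP⟩ ≥ -α(h)` at every point of the open set `D` on which the
CBF condition holds. -/
theorem stmt_7 (n m : ℕ)
    (h : EuclideanSpace ℝ (Fin n) → ℝ)
    (f : EuclideanSpace ℝ (Fin n) → EuclideanSpace ℝ (Fin n))
    (G : EuclideanSpace ℝ (Fin n) →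
      (EuclideanSpace ℝ (Fin m) →L[ℝ] EuclideanSpace ℝ (Fin n)))
    (kd : EuclideanSpace ℝ (Fin n) → EuclideanSpace ℝ (Fin m))
    (α : ℝ → ℝ)
    (hh : ContDiff ℝ 2 h) (hf : LocallyLipschitz f) (hG : LocallyLipschitz G)
    (hkd : LocallyLipschitz kd)
    (hα : LocallyLipschitz α) (hmono : StrictMono α) (hα0 : α 0 = 0)
    (D : Set (EuclideanSpace ℝ (Fin n))) (hD : IsOpen D)
    (hcbf : ∀ x ∈ D, ContinuousLinearMap.adjoint (G x) (gradient h x) ≠ 0 ∨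
      ⟪gradient h x, f x⟫ > -α (h x))
    (a b : EuclideanSpace ℝ (Fin n) → ℝ)
    (ha : ∀ x, a x = α (h x) + ⟪gradient h x, f x⟫ + ⟪gradient h x, G x (kd x)⟫)
    (hb : ∀ x, b x = ‖ContinuousLinearMap.adjoint (G x) (gradient h x)‖ ^ 2)
    (kQP : EuclideanSpace ℝ (Fin n) → EuclideanSpace ℝ (Fin m))
    (hkQP : ∀ x, kQP x =
      kd x + lamQP (a x) (b x) • ContinuousLinearMap.adjoint (G x) (gradient h x)) :
    ∀ x ∈ D, ⟪gradient h x, f x⟫ + ⟪gradient h x, G x (kQP x)⟫ ≥ -α (h x) := by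
  intro x hx
  have key : ∀ u, ⟪gradient h x, G x u⟫ =
      ⟪ContinuousLinearMap.adjoint (G x) (gradient h x), u⟫ :=
    fun u => (ContinuousLinearMap.adjoint_inner_left (G x) u (gradient h x)).symm
  set w := ContinuousLinearMap.adjoint (G x) (gradient h x) with hw
  have hbx : b x = ‖w‖ ^ 2 := hb x
  have expand : ⟪gradient h x, G x (kQP x)⟫
      = ⟪gradient h x, G x (kd x)⟫ + lamQP (a x) (b x) * b x := by
    rw [hkQP x, key, inner_add_right, real_inner_smul_right, ← key, hbx,
      real_inner_self_eq_norm_sq]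
  by_cases hb0 : b x = 0
  · have hw0 : w = 0 := by
      have h2 : ‖w‖ ^ 2 = 0 := hbx ▸ hb0
      simpa [norm_eq_zero] using pow_eq_zero_iff (n := 2) (by norm_num) |>.mp h2
    have hcb : ⟪gradient h x, f x⟫ > -α (h x) :=
      (hcbf x hx).resolve_left (by simp [← hw, hw0])
    have hz : ⟪gradient h x, G x (kd x)⟫ = (0:ℝ) := by
      rw [key, hw0]; simp
    rw [expand, hb0, hz]
    simp only [mul_zero, add_zero, zero_add]
    linarith
  · have hbpos : 0 < b x := lt_of_le_of_ne (hbx ▸ sq_nonneg ‖w‖) (Ne.symm hb0)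
    have hlam : lamQP (a x) (b x) * b x ≥ -a x := by
      have h1 : lamQP (a x) (b x) ≥ -a x / b x := by
        simp only [lamQP, hb0, if_false]
        exact le_max_right _ _
      calc lamQP (a x) (b x) * b x ≥ (-a x / b x) * b x := by nlinarith
        _ = -a x := div_mul_cancel₀ _ hb0
    rw [expand]
    have hax := ha x
    linarith
end

section
/- Define λ_HS : ℝ² → ℝ by λ_HS(a, b) = 0 if b = 0 and λ_HS(a, b) = (-a + √(a² + b²))/(2b) if b ≠ 0, and let P = {(a, b) ∈ ℝ² : a > 0 or b > 0}. Then λ_HS is real analytic (in particular C^∞) on the open set P. -/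
/-- The half-Sontag universal-formula gain. -/
noncomputable def lamHS (a b : ℝ) : ℝ :=
  if b = 0 then 0 else (-a + Real.sqrt (a ^ 2 + b ^ 2)) / (2 * b)

lemma lamHS_pos_denom {a b : ℝ} (h : 0 < a ∨ 0 < b) :
    0 < a + Real.sqrt (a ^ 2 + b ^ 2) := by
  rcases h with ha | hb
  · have := Real.sqrt_nonneg (a ^ 2 + b ^ 2); linarith
  · have h1 : Real.sqrt (a ^ 2) < Real.sqrt (a ^ 2 + b ^ 2) := by
      apply Real.sqrt_lt_sqrt (by positivity); nlinarith
    have h2 : Real.sqrt (a ^ 2) = |a| := by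
      rw [← Real.sqrt_sq_eq_abs]
    have := abs_nonneg a
    have := neg_abs_le a
    linarith

lemma lamHS_eq {a b : ℝ} (h : 0 < a ∨ 0 < b) :
    lamHS a b = b / (2 * (a + Real.sqrt (a ^ 2 + b ^ 2))) := by
  have hd := lamHS_pos_denom h
  unfold lamHS
  by_cases hb : b = 0
  · simp [hb]
  · rw [if_neg hb]
    have hsq : Real.sqrt (a ^ 2 + b ^ 2) ^ 2 = a ^ 2 + b ^ 2 :=
      Real.sq_sqrt (by positivity)
    rw [div_eq_div_iff (by positivity) (by positivity)]
    nlinarith [hsq]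

/-- The half-Sontag gain `λ_HS` is real analytic (in particular `C^∞`) on the open set
`P = {(a, b) | a > 0 ∨ b > 0}` (paper's Corollary 2 / smooth safety filter). -/
theorem stmt_8 :
    AnalyticOnNhd ℝ (fun p : ℝ × ℝ => lamHS p.1 p.2) {p : ℝ × ℝ | 0 < p.1 ∨ 0 < p.2} ∧
    ContDiffOn ℝ ⊤ (fun p : ℝ × ℝ => lamHS p.1 p.2) {p : ℝ × ℝ | 0 < p.1 ∨ 0 < p.2} := by
  have hopen : IsOpen {p : ℝ × ℝ | 0 < p.1 ∨ 0 < p.2} :=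
    (isOpen_lt continuous_const continuous_fst).union
      (isOpen_lt continuous_const continuous_snd)
  have key : AnalyticOnNhd ℝ
      (fun p : ℝ × ℝ => p.2 / (2 * (p.1 + Real.sqrt (p.1 ^ 2 + p.2 ^ 2))))
      {p : ℝ × ℝ | 0 < p.1 ∨ 0 < p.2} := by
    intro p hp
    have hp' : 0 < p.1 ∨ 0 < p.2 := hp
    have hd := lamHS_pos_denom hp'
    have hinner : p.1 ^ 2 + p.2 ^ 2 ≠ 0 := by
      rcases hp' with h | h <;> positivity
    have hin : AnalyticAt ℝ (fun q : ℝ × ℝ => q.1 ^ 2 + q.2 ^ 2) p :=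
      ((analyticAt_fst.pow 2).add (analyticAt_snd.pow 2))
    have hsqrt : AnalyticAt ℝ (fun q : ℝ × ℝ => Real.sqrt (q.1 ^ 2 + q.2 ^ 2)) p :=
      by
      have h1 : AnalyticAt ℝ Real.sqrt (p.1 ^ 2 + p.2 ^ 2) :=
        (Real.contDiffAt_sqrt (n := (⊤ : WithTop ℕ∞)) hinner).analyticAt
      exact AnalyticAt.comp (g := Real.sqrt) (f := fun q : ℝ × ℝ => q.1 ^ 2 + q.2 ^ 2) h1 hin
    exact analyticAt_snd.div
      ((analyticAt_const.mul (analyticAt_fst.add hsqrt))) (by positivity)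
  have hA : AnalyticOnNhd ℝ (fun p : ℝ × ℝ => lamHS p.1 p.2)
      {p : ℝ × ℝ | 0 < p.1 ∨ 0 < p.2} :=
    key.congr hopen fun p hp => (lamHS_eq hp).symm
  exact ⟨hA, (hA.contDiffOn hopen.uniqueDiffOn).of_le le_top⟩
end

section
/- Let W ⊆ ℝⁿ be a linear subspace with orthogonal projection P : ℝⁿ → ℝⁿ onto W. Let h₀ : ℝⁿ → ℝ be continuously differentiable, D₀ ⊆ ℝⁿ open, α : ℝ → ℝ strictly increasing with α(0) = 0, and κ : ℝⁿ → ℝⁿ continuously differentiable with ⟨∇h₀(q), κ(q)⟩ > -α(h₀(q)) for all q ∈ D₀. Assume the underactuation condition: ∇h₀(q) ∈ W for all q ∈ D₀. Let V : ℝⁿ → ℝ be twice continuously differentiable, let ε > 0, define h(q, v) = h₀(q) - (ε/2)‖P(v - κ(q))‖², and define ḣ(q, v, F) = ⟨∇h₀(q), v⟩ + ε⟨P(v - κ(q)), Dκ(q)v + ∇V(q)⟩ - ε⟨F, P(v - κ(q))⟩. Then for every q ∈ D₀ and every v ∈ ℝⁿ there exists F ∈ W such that ḣ(q, v, F) > -α(h(q,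 v)). -/
open scoped RealInnerProductSpace

/-!
Write `e = P (v - κ q)`. If `e ≠ 0`, then `ḣ(q, v, F)` is affine in `F` with slope `-ε e ≠ 0` along
`W`, so a large enough force `F = t • e` beats any bound. If `e = 0`, then `h q v = h₀ q`, the
force drops out, and `v - κ q ∈ Wᗮ` is orthogonal to `∇h₀(q) ∈ W`; so `ḣ(q, v, F)` is
`⟪∇h₀(q), κ q⟫`, which exceeds `-α(h₀ q)` because `κ` is a safe velocity field.
-/

theorem exists_smul_lt_sub_mul_inner {E : Type*} [NormedAddCommGroup E] [InnerProductSpace ℝ E]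
    {e : E} (he : e ≠ 0) {c : ℝ} (hc : c ≠ 0) (a b : ℝ) :
    ∃ t : ℝ, b < a - c * ⟪t • e, e⟫ := by
  refine ⟨(a - b - 1) / (c * ‖e‖ ^ 2), ?_⟩
  have hce : c * ‖e‖ ^ 2 ≠ 0 := by positivity
  rw [real_inner_smul_left, real_inner_self_eq_norm_sq, ← mul_assoc, mul_comm c,
    mul_assoc, div_mul_cancel₀ _ hce]
  linarith

theorem stmt_14_general (n : ℕ)
    (W : Submodule ℝ (EuclideanSpace ℝ (Fin n)))
    (P : EuclideanSpace ℝ (Fin n) →L[ℝ] EuclideanSpace ℝ (Fin n))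
    (hP : ∀ x, P x = (W.orthogonalProjectionOnto x : EuclideanSpace ℝ (Fin n)))
    (h₀ : EuclideanSpace ℝ (Fin n) → ℝ)
    (D₀ : Set (EuclideanSpace ℝ (Fin n)))
    (α : ℝ → ℝ)
    (κ : EuclideanSpace ℝ (Fin n) → EuclideanSpace ℝ (Fin n))
    (hsafe : ∀ q ∈ D₀, ⟪gradient h₀ q, κ q⟫ > -α (h₀ q))
    (hunder : ∀ q ∈ D₀, gradient h₀ q ∈ W)
    (V : EuclideanSpace ℝ (Fin n) → ℝ)
    (ε : ℝ) (hε : 0 < ε)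
    (h : EuclideanSpace ℝ (Fin n) → EuclideanSpace ℝ (Fin n) → ℝ)
    (hdef : ∀ q v, h q v = h₀ q - ε / 2 * ‖P (v - κ q)‖ ^ 2)
    (hdot : EuclideanSpace ℝ (Fin n) → EuclideanSpace ℝ (Fin n) →
      EuclideanSpace ℝ (Fin n) → ℝ)
    (hdotdef : ∀ q v F, hdot q v F =
      ⟪gradient h₀ q, v⟫
        + ε * ⟪P (v - κ q), fderiv ℝ κ q v + gradient V q⟫
        - ε * ⟪F, P (v - κ q)⟫) :
    ∀ q ∈ D₀, ∀ v : EuclideanSpace ℝ (Fin n),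
      ∃ F ∈ W, hdot q v F > -α (h q v) := by
  intro q hq v
  rcases eq_or_ne (P (v - κ q)) 0 with hzero | hne
  · have hv : ⟪gradient h₀ q, v⟫ = ⟪gradient h₀ q, κ q⟫ := by
      have horth := W.inner_orthogonalProjectionOnto_eq_of_mem_left ⟨_, hunder q hq⟩ (v - κ q)
      rw [Submodule.coe_inner, ← hP, hzero, inner_zero_right, inner_sub_right] at horth
      linarith
    refine ⟨0, W.zero_mem, ?_⟩
    simpa [hdotdef, hdef, hzero, hv] using hsafe q hq
  · have hPW : P (v - κ q) ∈ W := by rw [hP]; exact Submodule.coe_mem _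
    obtain ⟨t, ht⟩ := exists_smul_lt_sub_mul_inner hne hε.ne'
      (⟪gradient h₀ q, v⟫ + ε * ⟪P (v - κ q), fderiv ℝ κ q v + gradient V q⟫) (-α (h q v))
    exact ⟨t • P (v - κ q), W.smul_mem t hPW, by rw [hdotdef]; exact ht⟩

/-- Euclidean form of the paper's Theorem 2 (backstepping CBF synthesis): for a simple
mechanical control system `v̇ = -∇V(q) + F` with forces `F` in the actuated subspace
`W`, if the safe velocity field `κ` satisfies the strict barrier inequality on `D₀`
and the underactuation condition `∇h₀(q) ∈ W` holds on `D₀`, then at every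
`(q, v) ∈ D₀ × ℝⁿ` there exists `F ∈ W` with `ḣ(q, v, F) > -α(h(q, v))`, i.e. the
backstepping candidate `h(q,v) = h₀(q) - (ε/2)‖P(v - κ(q))‖²` is a CBF. -/
theorem stmt_14 (n : ℕ)
    (W : Submodule ℝ (EuclideanSpace ℝ (Fin n)))
    (P : EuclideanSpace ℝ (Fin n) →L[ℝ] EuclideanSpace ℝ (Fin n))
    (hP : ∀ x, P x = (W.orthogonalProjectionOnto x : EuclideanSpace ℝ (Fin n)))
    (h₀ : EuclideanSpace ℝ (Fin n) → ℝ) (hh₀ : ContDiff ℝ 1 h₀)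
    (D₀ : Set (EuclideanSpace ℝ (Fin n))) (hD₀ : IsOpen D₀)
    (α : ℝ → ℝ) (hmono : StrictMono α) (hα0 : α 0 = 0)
    (κ : EuclideanSpace ℝ (Fin n) → EuclideanSpace ℝ (Fin n)) (hκ : ContDiff ℝ 1 κ)
    (hsafe : ∀ q ∈ D₀, ⟪gradient h₀ q, κ q⟫ > -α (h₀ q))
    (hunder : ∀ q ∈ D₀, gradient h₀ q ∈ W)
    (V : EuclideanSpace ℝ (Fin n) → ℝ) (hV : ContDiff ℝ 2 V)
    (ε : ℝ) (hε : 0 < ε)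
    (h : EuclideanSpace ℝ (Fin n) → EuclideanSpace ℝ (Fin n) → ℝ)
    (hdef : ∀ q v, h q v = h₀ q - ε / 2 * ‖P (v - κ q)‖ ^ 2)
    (hdot : EuclideanSpace ℝ (Fin n) → EuclideanSpace ℝ (Fin n) →
      EuclideanSpace ℝ (Fin n) → ℝ)
    (hdotdef : ∀ q v F, hdot q v F =
      ⟪gradient h₀ q, v⟫
        + ε * ⟪P (v - κ q), fderiv ℝ κ q v + gradient V q⟫
        - ε * ⟪F, P (v - κ q)⟫) :
    ∀ q ∈ D₀, ∀ v : EuclideanSpace ℝ (Fin n),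
      ∃ F ∈ W, hdot q v F > -α (h q v) :=
  stmt_14_general n W P hP h₀ D₀ α κ hsafe hunder V ε hε h hdef hdot hdotdef
end

section
/- Let W ⊆ ℝⁿ be a linear subspace with orthogonal projection P onto W, h₀ : ℝⁿ → ℝ continuously differentiable, κ : ℝⁿ → ℝⁿ continuously differentiable, ε > 0, and h(q, v) = h₀(q) - (ε/2)‖P(v - κ(q))‖². Let α : ℝ → ℝ be locally Lipschitz, strictly increasing, with α(0) = 0. Let T ∈ (0, ∞] and let q, v : [0, T) → ℝⁿ be curves such that φ(t) := h(q(t), v(t)) is differentiable with φ'(t) ≥ -α(φ(t)) for all t ∈ [0, T). If h(q(0), v(0)) ≥ 0, then h₀(q(t)) ≥ 0 for all t ∈ [0, T). -/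
open scoped RealInnerProductSpace ENNReal

open Set

/- Fencing with the constant barrier `-δ`: where `f` touches `-δ < 0` it is strictly increasing,
so it never crosses below `-δ`; then let `δ → 0`. -/
theorem nonneg_of_hasDerivWithinAt_pos_of_neg {f f' : ℝ → ℝ} {a b : ℝ}
    (hf : ContinuousOn f (Icc a b)) (hf' : ∀ x ∈ Ico a b, HasDerivWithinAt f (f' x) (Ici x) x)
    (hpos : ∀ x ∈ Ico a b, f x < 0 → 0 < f' x) (ha : 0 ≤ f a) :
    ∀ x ∈ Icc a b, 0 ≤ f x := by
  intro x hx
  refine le_of_forall_pos_le_add fun δ hδ => ?_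
  have hfence : -f x ≤ δ :=
    image_le_of_deriv_right_lt_deriv_boundary hf.neg (fun y hy => (hf' y hy).neg)
      (B := fun _ => δ) (by simp only [Pi.neg_apply]; linarith) (fun _ => hasDerivAt_const _ δ)
      (fun y hy hyδ => by
        simp only [Pi.neg_apply] at hyδ ⊢
        linarith [hpos y hy (by linarith)]) hx
  linarith

theorem nonneg_of_hasDerivAt_ge_neg_comp {φ φ' α : ℝ → ℝ} {a b : ℝ}
    (hφ : ∀ x ∈ Icc a b, HasDerivAt φ (φ' x) x) (hineq : ∀ x ∈ Icc a b, -α (φ x) ≤ φ' x)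
    (hα : StrictMono α) (hα0 : α 0 = 0) (ha : 0 ≤ φ a) :
    ∀ x ∈ Icc a b, 0 ≤ φ x := by
  refine nonneg_of_hasDerivWithinAt_pos_of_neg
    (fun x hx => (hφ x hx).continuousAt.continuousWithinAt)
    (fun x hx => (hφ x (Ico_subset_Icc_self hx)).hasDerivWithinAt) (fun x hx hneg => ?_) ha
  have hαneg : α (φ x) < 0 := hα0 ▸ hα hneg
  linarith [hineq x (Ico_subset_Icc_self hx)]

theorem stmt_15_general (n : ℕ)
    (P : EuclideanSpace ℝ (Fin n) →L[ℝ] EuclideanSpace ℝ (Fin n))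
    (h₀ : EuclideanSpace ℝ (Fin n) → ℝ)
    (κ : EuclideanSpace ℝ (Fin n) → EuclideanSpace ℝ (Fin n))
    (ε : ℝ) (hε : 0 < ε)
    (h : EuclideanSpace ℝ (Fin n) → EuclideanSpace ℝ (Fin n) → ℝ)
    (hdef : ∀ q v, h q v = h₀ q - ε / 2 * ‖P (v - κ q)‖ ^ 2)
    (α : ℝ → ℝ)
    (hmono : StrictMono α) (hα0 : α 0 = 0)
    (T : ℝ≥0∞)
    (q v : ℝ → EuclideanSpace ℝ (Fin n))
    (φ' : ℝ → ℝ)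
    (hdiff : ∀ t : ℝ, 0 ≤ t → ENNReal.ofReal t < T →
      HasDerivAt (fun s => h (q s) (v s)) (φ' t) t)
    (hineq : ∀ t : ℝ, 0 ≤ t → ENNReal.ofReal t < T → φ' t ≥ -α (h (q t) (v t)))
    (h0 : 0 ≤ h (q 0) (v 0)) :
    ∀ t : ℝ, 0 ≤ t → ENNReal.ofReal t < T → 0 ≤ h₀ (q t) := by
  intro t ht htT
  have hlt : ∀ s ∈ Icc 0 t, ENNReal.ofReal s < T := fun s hs =>
    (ENNReal.ofReal_le_ofReal hs.2).trans_lt htT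
  have hsafe : 0 ≤ h (q t) (v t) :=
    nonneg_of_hasDerivAt_ge_neg_comp (fun s hs => hdiff s hs.1 (hlt s hs))
      (fun s hs => hineq s hs.1 (hlt s hs)) hmono hα0 h0 t ⟨ht, le_rfl⟩
  rw [hdef] at hsafe
  have hpen : 0 ≤ ε / 2 * ‖P (v t - κ (q t))‖ ^ 2 := by positivity
  linarith

/-- Euclidean form of the paper's Proposition 2: if along curves `q, v` the value
`φ(t) = h(q(t), v(t))` of the backstepping CBF
`h(q, v) = h₀(q) - (ε/2)‖P(v - κ(q))‖²` satisfies the barrier differential inequality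
`φ' ≥ -α(φ)` on `[0, T)` and `h(q(0), v(0)) ≥ 0`, then the configuration stays safe:
`h₀(q(t)) ≥ 0` for all `t ∈ [0, T)`. -/
theorem stmt_15 (n : ℕ)
    (W : Submodule ℝ (EuclideanSpace ℝ (Fin n)))
    (P : EuclideanSpace ℝ (Fin n) →L[ℝ] EuclideanSpace ℝ (Fin n))
    (hP : ∀ x, P x = (W.orthogonalProjectionOnto x : EuclideanSpace ℝ (Fin n)))
    (h₀ : EuclideanSpace ℝ (Fin n) → ℝ) (hh₀ : ContDiff ℝ 1 h₀)
    (κ : EuclideanSpace ℝ (Fin n) → EuclideanSpace ℝ (Fin n)) (hκ : ContDiff ℝ 1 κ)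
    (ε : ℝ) (hε : 0 < ε)
    (h : EuclideanSpace ℝ (Fin n) → EuclideanSpace ℝ (Fin n) → ℝ)
    (hdef : ∀ q v, h q v = h₀ q - ε / 2 * ‖P (v - κ q)‖ ^ 2)
    (α : ℝ → ℝ)
    (hα : LocallyLipschitz α) (hmono : StrictMono α) (hα0 : α 0 = 0)
    (T : ℝ≥0∞) (hT : 0 < T)
    (q v : ℝ → EuclideanSpace ℝ (Fin n))
    (φ' : ℝ → ℝ)
    (hdiff : ∀ t : ℝ, 0 ≤ t → ENNReal.ofReal t < T →
      HasDerivAt (fun s => h (q s) (v s)) (φ' t) t)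
    (hineq : ∀ t : ℝ, 0 ≤ t → ENNReal.ofReal t < T → φ' t ≥ -α (h (q t) (v t)))
    (h0 : 0 ≤ h (q 0) (v 0)) :
    ∀ t : ℝ, 0 ≤ t → ENNReal.ofReal t < T → 0 ≤ h₀ (q t) :=
  stmt_15_general n P h₀ κ ε hε h hdef α hmono hα0 T q v φ' hdiff hineq h0
end

section
/- Let h : ℝⁿ → ℝ be twice continuously differentiable, f : ℝⁿ → ℝⁿ, G : ℝⁿ → ℝ^{n×m}, k_d : ℝⁿ → ℝᵐ locally Lipschitz, and α : ℝ → ℝ locally Lipschitz, strictly increasing with α(0) = 0. Let D ⊆ ℝⁿ be open with C = {x : h(x) ≥ 0} ⊆ D, and suppose that for every x ∈ D, either G(x)ᵀ∇h(x) ≠ 0 or ∇h(x)·f(x) > -α(h(x)). Define a(x) = α(h(x)) + ∇h(x)·f(x) + ∇h(x)·G(x)k_d(x), b(x) = ‖G(x)ᵀ∇h(x)‖², λ_QP(a,b) = 0 if b = 0 and max{0, -a/b} otherwise, and k_QP(x) = k_d(x) + λ_QP(a(x), b(x))·G(x)ᵀ∇h(x). Then for every T ∈ (0, ∞] and every differentiable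 curve x : [0, T) → D with x'(t) = f(x(t)) + G(x(t))k_QP(x(t)) for all t ∈ [0, T) and h(x(0)) ≥ 0, one has h(x(t)) ≥ 0 for all t ∈ [0, T). -/
/-!
Along a trajectory, `y = h ∘ x` has derivative `⟪∇h, f + G k_QP⟫ ≥ -α(y)`: when
`b = ‖Gᵀ∇h‖² > 0` the gain `λ_QP` raises the slack `a` to at least zero, and when `b = 0`
the CBF condition forces `a > 0`. While `y < 0`, `α(y) < α(0) = 0`, so `y` cannot decrease;
starting from `y(0) ≥ 0`, it therefore never becomes negative.
-/

open scoped RealInnerProductSpace ENNReal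

open Set

theorem HasGradientAt.comp_hasDerivAt {F : Type*} [NormedAddCommGroup F] [InnerProductSpace ℝ F]
    [CompleteSpace F] {f : F → ℝ} {f' : F} {x : ℝ → F} {x' : F} {t : ℝ}
    (hf : HasGradientAt f f' (x t)) (hx : HasDerivAt x x' t) :
    HasDerivAt (f ∘ x) ⟪f', x'⟫ t := by
  simpa using hf.hasFDerivAt.comp_hasDerivAt t hx

theorem nonneg_of_hasDerivAt_nonneg_of_neg {y y' : ℝ → ℝ} {a b : ℝ} (hab : a ≤ b)
    (hy : ∀ t ∈ Icc a b, HasDerivAt y (y' t) t)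
    (hy' : ∀ t ∈ Ioo a b, y t < 0 → 0 ≤ y' t) (hya : 0 ≤ y a) : 0 ≤ y b := by
  by_contra! hyb
  set S := Icc a b ∩ {t | 0 ≤ y t}
  have hcont : ContinuousOn y (Icc a b) := fun t ht => (hy t ht).continuousAt.continuousWithinAt
  have hS : IsCompact S := isCompact_Icc.of_isClosed_subset
    (hcont.preimage_isClosed_of_isClosed isClosed_Icc isClosed_Ici) inter_subset_left
  obtain ⟨⟨has, hsb⟩, hys⟩ : sSup S ∈ S := hS.sSup_mem ⟨a, ⟨le_rfl, hab⟩, hya⟩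
  set s := sSup S
  -- after the last time `s` at which `y ≥ 0`, `y` is negative, hence nondecreasing
  have hneg : ∀ t ∈ Ioc s b, y t < 0 := fun t ⟨hst, htb⟩ => by
    by_contra! hyt
    exact hst.not_ge (le_csSup hS.bddAbove ⟨⟨has.trans hst.le, htb⟩, hyt⟩)
  have hmono : MonotoneOn y (Icc s b) := by
    refine monotoneOn_of_hasDerivWithinAt_nonneg (f' := y') (convex_Icc s b)
      (hcont.mono (Icc_subset_Icc has le_rfl)) (fun t ht => ?_) (fun t ht => ?_)
    all_goals rw [interior_Icc] at ht
    · exact (hy t ⟨has.trans ht.1.le, ht.2.le⟩).hasDerivWithinAt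
    · exact hy' t ⟨has.trans_lt ht.1, ht.2⟩ (hneg t ⟨ht.1, ht.2.le⟩)
  have hys : 0 ≤ y s := hys
  linarith [hmono ⟨le_rfl, hsb⟩ ⟨hsb, le_rfl⟩ hsb]

theorem lamQP_mul_add_nonneg {a b : ℝ} (hb : 0 ≤ b) (ha : b = 0 → 0 < a) :
    0 ≤ a + lamQP a b * b := by
  rcases hb.eq_or_lt with rfl | hb
  · simpa [lamQP] using (ha rfl).le
  · rw [lamQP, if_neg hb.ne', max_mul_of_nonneg _ _ hb.le, div_mul_cancel₀ _ hb.ne']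
    linarith [le_max_right (0 * b) (-a)]

section BarrierInequality

variable {E F : Type*} [NormedAddCommGroup E] [InnerProductSpace ℝ E] [CompleteSpace E]
  [NormedAddCommGroup F] [InnerProductSpace ℝ F] [CompleteSpace F]

open ContinuousLinearMap

theorem inner_apply_add_smul_adjoint (A : F →L[ℝ] E) (g : E) (u : F) (c : ℝ) :
    ⟪g, A (u + c • adjoint A g)⟫ = ⟪g, A u⟫ + c * ‖adjoint A g‖ ^ 2 := by
  rw [← adjoint_inner_left, ← adjoint_inner_left, inner_add_right, inner_smul_right,
    real_inner_self_eq_norm_sq]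

theorem neg_le_inner_add_apply_lamQP (A : F →L[ℝ] E) (g w : E) (u : F) (c : ℝ)
    (hcbf : adjoint A g ≠ 0 ∨ -c < ⟪g, w⟫) :
    -c ≤ ⟪g, w + A (u + lamQP (c + ⟪g, w⟫ + ⟪g, A u⟫) (‖adjoint A g‖ ^ 2) • adjoint A g)⟫ := by
  have hslack := lamQP_mul_add_nonneg (a := c + ⟪g, w⟫ + ⟪g, A u⟫) (sq_nonneg ‖adjoint A g‖)
    fun hb => by
      have hzero : adjoint A g = 0 := by simpa using hb
      have hAu : ⟪g, A u⟫ = 0 := by rw [← adjoint_inner_left, hzero, inner_zero_left]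
      have := hcbf.resolve_left (not_not.mpr hzero)
      linarith
  rw [inner_add_right, inner_apply_add_smul_adjoint]
  linarith

end BarrierInequality

theorem stmt_16_general (n m : ℕ)
    (h : EuclideanSpace ℝ (Fin n) → ℝ)
    (f : EuclideanSpace ℝ (Fin n) → EuclideanSpace ℝ (Fin n))
    (G : EuclideanSpace ℝ (Fin n) →
      (EuclideanSpace ℝ (Fin m) →L[ℝ] EuclideanSpace ℝ (Fin n)))
    (kd : EuclideanSpace ℝ (Fin n) → EuclideanSpace ℝ (Fin m))
    (α : ℝ → ℝ)
    (hh : ContDiff ℝ 2 h)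
    (hmono : StrictMono α) (hα0 : α 0 = 0)
    (D : Set (EuclideanSpace ℝ (Fin n)))
    (hcbf : ∀ x ∈ D, ContinuousLinearMap.adjoint (G x) (gradient h x) ≠ 0 ∨
      ⟪gradient h x, f x⟫ > -α (h x))
    (a b : EuclideanSpace ℝ (Fin n) → ℝ)
    (ha : ∀ x, a x = α (h x) + ⟪gradient h x, f x⟫ + ⟪gradient h x, G x (kd x)⟫)
    (hb : ∀ x, b x = ‖ContinuousLinearMap.adjoint (G x) (gradient h x)‖ ^ 2)
    (kQP : EuclideanSpace ℝ (Fin n) → EuclideanSpace ℝ (Fin m))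
    (hkQP : ∀ x, kQP x =
      kd x + lamQP (a x) (b x) • ContinuousLinearMap.adjoint (G x) (gradient h x))
    (T : ℝ≥0∞)
    (x : ℝ → EuclideanSpace ℝ (Fin n))
    (hxD : ∀ t : ℝ, 0 ≤ t → ENNReal.ofReal t < T → x t ∈ D)
    (hx : ∀ t : ℝ, 0 ≤ t → ENNReal.ofReal t < T →
      HasDerivAt x (f (x t) + G (x t) (kQP (x t))) t)
    (hx0 : 0 ≤ h (x 0)) :
    ∀ t : ℝ, 0 ≤ t → ENNReal.ofReal t < T → 0 ≤ h (x t) := by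
  intro t₁ ht₁ hTt₁
  have hT : ∀ t ∈ Icc 0 t₁, ENNReal.ofReal t < T := fun t ht =>
    (ENNReal.ofReal_le_ofReal ht.2).trans_lt hTt₁
  have hbarrier : ∀ z ∈ D, -α (h z) ≤ ⟪gradient h z, f z + G z (kQP z)⟫ := fun z hz => by
    rw [hkQP, ha, hb]
    exact neg_le_inner_add_apply_lamQP _ _ _ _ _ (hcbf z hz)
  refine nonneg_of_hasDerivAt_nonneg_of_neg (y := h ∘ x) ht₁
    (fun t ht => ((hh.differentiable (by norm_num) _).hasGradientAt).comp_hasDerivAt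
      (hx t ht.1 (hT t ht))) (fun t ht hyt => ?_) hx0
  have hαneg : α (h (x t)) < 0 := hα0 ▸ hmono hyt
  linarith [hbarrier (x t) (hxD t ht.1.le (hT t (Ioo_subset_Icc_self ht)))]

/-- Safety conclusion of the paper's Corollary 1 in Euclidean form: the closed-form
CBF-QP safety filter `k_QP` renders the zero-superlevel set `C = {h ≥ 0}` forward
invariant for the closed-loop system `ẋ = f(x) + G(x)·k_QP(x)`, along solutions
remaining in the open set `D ⊇ C` on which the CBF condition holds. -/
theorem stmt_16 (n m : ℕ)
    (h : EuclideanSpace ℝ (Fin n) → ℝ)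
    (f : EuclideanSpace ℝ (Fin n) → EuclideanSpace ℝ (Fin n))
    (G : EuclideanSpace ℝ (Fin n) →
      (EuclideanSpace ℝ (Fin m) →L[ℝ] EuclideanSpace ℝ (Fin n)))
    (kd : EuclideanSpace ℝ (Fin n) → EuclideanSpace ℝ (Fin m))
    (α : ℝ → ℝ)
    (hh : ContDiff ℝ 2 h) (hf : LocallyLipschitz f) (hG : LocallyLipschitz G)
    (hkd : LocallyLipschitz kd)
    (hα : LocallyLipschitz α) (hmono : StrictMono α) (hα0 : α 0 = 0)
    (C D : Set (EuclideanSpace ℝ (Fin n)))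
    (hC : C = {x | 0 ≤ h x})
    (hD : IsOpen D) (hCD : C ⊆ D)
    (hcbf : ∀ x ∈ D, ContinuousLinearMap.adjoint (G x) (gradient h x) ≠ 0 ∨
      ⟪gradient h x, f x⟫ > -α (h x))
    (a b : EuclideanSpace ℝ (Fin n) → ℝ)
    (ha : ∀ x, a x = α (h x) + ⟪gradient h x, f x⟫ + ⟪gradient h x, G x (kd x)⟫)
    (hb : ∀ x, b x = ‖ContinuousLinearMap.adjoint (G x) (gradient h x)‖ ^ 2)
    (kQP : EuclideanSpace ℝ (Fin n) → EuclideanSpace ℝ (Fin m))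
    (hkQP : ∀ x, kQP x =
      kd x + lamQP (a x) (b x) • ContinuousLinearMap.adjoint (G x) (gradient h x))
    (T : ℝ≥0∞) (hT : 0 < T)
    (x : ℝ → EuclideanSpace ℝ (Fin n))
    (hxD : ∀ t : ℝ, 0 ≤ t → ENNReal.ofReal t < T → x t ∈ D)
    (hx : ∀ t : ℝ, 0 ≤ t → ENNReal.ofReal t < T →
      HasDerivAt x (f (x t) + G (x t) (kQP (x t))) t)
    (hx0 : 0 ≤ h (x 0)) :
    ∀ t : ℝ, 0 ≤ t → ENNReal.ofReal t < T → 0 ≤ h (x t) :=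
  stmt_16_general n m h f G kd α hh hmono hα0 D hcbf a b ha hb kQP hkQP T x hxD hx hx0
end
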